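/- Let (X, ε : X₀ → G) be an augmented simplicial group, n ≥ 1 and k ≥ 2. Suppose the exactness condition d^n_n(⋂_{i=0}^{n-1} Ker d^n_i) = ⋂_{i=0}^{n-1} Ker d^{n-1}_i holds at level n (with the convention that for n = 1 the right-hand side is Ker ε); this holds in particular when (X, ε, G) is aspherical. Then d^n_n(D_k(X_n; Ker d^n_0, …, Ker d^n_{n-1})) = D_k(X_{n-1}; Ker d^{n-1}_0, …, Ker d^{n-1}_{n-1}), where for n = 1 the right-hand side is D_k(X₀; Ker ε). -/

import Mathlib

open CategoryTheory Simplicial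

/-- Iterated commutator `⁅H₁, ⁅H₂, …, ⁅H_{k-1}, H_k⁆…⁆⁆` of a list of subgroups. -/
def iterCommutator {F : Type*} [Group F] : List (Subgroup F) → Subgroup F := fun l =>
  match l with
  | [] => ⊥
  | H :: [] => H
  | H :: t => ⁅H, iterCommutator t⁆

/-- `K_B = ⋂_{i∈B} R_i`, with the convention `K_∅ = F`. -/
def adInf {F : Type*} [Group F] {n : ℕ} (R : Fin n → Subgroup F) (B : Finset (Fin n)) :
    Subgroup F :=
  ⨅ i ∈ B, R i

/-- `D_k(F;A)`: the product (join) of the iterated commutator subgroups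
`⁅K_{A₁},⁅K_{A₂},…,⁅K_{A_{k-1}},K_{A_k}⁆…⁆⁆` over all `k`-tuples `(A₁,…,A_k)` of
(possibly empty) subsets with `A₁ ∪ ⋯ ∪ A_k = A`. -/
def adD {F : Type*} [Group F] {n : ℕ} (R : Fin n → Subgroup F) (k : ℕ) (A : Finset (Fin n)) :
    Subgroup F :=
  ⨆ (c : Fin k → Finset (Fin n)) (_ : Finset.univ.sup c = A),
    iterCommutator (List.ofFn fun i => adInf R (c i))

/-!
Joins and commutators of subgroups commute with taking images, so it suffices that `d^n_n` maps
`⋂_{i ∈ B} Ker d^n_i` onto `⋂_{i ∈ B} Ker d^{n-1}_i` for every `B ⊆ {0, …, n-1}`. For the full set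
this is the hypothesis. For a proper subset it holds in every simplicial group: starting from any
preimage `x` of `y`, one kills the faces in `B` one at a time. If `t ∈ B` is adjacent to some
`s ∉ B`, with `{t, s} = {u, u+1}`, then `x · (s_u d_t x)⁻¹` has trivial `t`-th face, and the
simplicial identities show that it keeps `d_n x = y` and the faces already killed.
-/

lemma iterCommutator_map {F F' : Type*} [Group F] [Group F'] (f : F →* F')
    (L : List (Subgroup F)) :
    (iterCommutator L).map f = iterCommutator (L.map (Subgroup.map f)) := by
  induction L with
  | nil => simp [iterCommutator]
  | cons H t ih =>
    cases t with
    | nil => simp [iterCommutator]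
    | cons H' t => simp only [iterCommutator, Subgroup.map_commutator, ih, List.map_cons]

lemma adD_map {F F' : Type*} [Group F] [Group F'] (f : F →* F') {n k : ℕ}
    {R : Fin n → Subgroup F} {S : Fin n → Subgroup F'}
    (h : ∀ B, (adInf R B).map f = adInf S B) (A : Finset (Fin n)) :
    (adD R k A).map f = adD S k A := by
  simp only [adD, Subgroup.map_iSup, iterCommutator_map, List.map_ofFn, Function.comp_def, h]

lemma mem_adInf {F : Type*} [Group F] {n : ℕ} {R : Fin n → Subgroup F} {B : Finset (Fin n)}
    {x : F} : x ∈ adInf R B ↔ ∀ i ∈ B, x ∈ R i := by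
  simp [adInf, Subgroup.mem_iInf]

lemma adInf_univ {F : Type*} [Group F] {n : ℕ} (R : Fin n → Subgroup F) :
    adInf R Finset.univ = ⨅ i, R i := by
  simp [adInf]

lemma map_adInf_const_fin_one {F F' : Type*} [Group F] [Group F'] {f : F →* F'}
    (hf : Function.Surjective f) {K : Subgroup F} {L : Subgroup F'} (h : K.map f = L)
    (B : Finset (Fin 1)) :
    (adInf (fun _ => K) B).map f = adInf (fun _ => L) B := by
  rcases B.eq_empty_or_nonempty with rfl | hB
  · simpa [adInf] using Subgroup.map_top_of_surjective f hf
  · obtain ⟨a, ha⟩ := hB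
    rw [show B = Finset.univ from Finset.eq_univ_of_forall fun i => Subsingleton.elim a i ▸ ha,
      adInf_univ, adInf_univ]
    simpa using h

lemma Fin.exists_xor_castSucc_mem_succ_mem {n : ℕ} {A : Finset (Fin (n + 1))}
    (h₀ : A.Nonempty) (h₁ : A ≠ Finset.univ) :
    ∃ u : Fin n, Xor (u.castSucc ∈ A) (u.succ ∈ A) := by
  by_contra! h
  simp only [xor_iff_not_iff, not_not] at h
  have hconst : ∀ i, i ∈ A ↔ (0 : Fin (n + 1)) ∈ A := by
    intro i
    induction i using Fin.induction with
    | zero => rfl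
    | succ u ih => rw [← h u, ih]
  obtain ⟨a, ha⟩ := h₀
  exact h₁ (Finset.eq_univ_of_forall fun i => (hconst i).2 ((hconst a).1 ha))

namespace CategoryTheory.SimplicialObject

variable {X : SimplicialObject GrpCat}

lemma δ_δ_apply {n : ℕ} {i j : Fin (n + 2)} (h : i ≤ j) (x : X _⦋n + 2⦌) :
    (X.δ i).hom ((X.δ j.succ).hom x) = (X.δ j).hom ((X.δ i.castSucc).hom x) :=
  ConcreteCategory.congr_hom (X.δ_comp_δ h) x

lemma δ_σ_apply_of_le {n : ℕ} {i : Fin (n + 2)} {j : Fin (n + 1)} (h : i ≤ j.castSucc)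
    (w : X _⦋n + 1⦌) :
    (X.δ i.castSucc).hom ((X.σ j.succ).hom w) = (X.σ j).hom ((X.δ i).hom w) :=
  ConcreteCategory.congr_hom (X.δ_comp_σ_of_le h) w

lemma δ_σ_apply_of_gt {n : ℕ} {i : Fin (n + 2)} {j : Fin (n + 1)} (h : j.castSucc < i)
    (w : X _⦋n + 1⦌) :
    (X.δ i.succ).hom ((X.σ j.castSucc).hom w) = (X.σ j).hom ((X.δ i).hom w) :=
  ConcreteCategory.congr_hom (X.δ_comp_σ_of_gt h) w

lemma δ_castSucc_σ_apply {n : ℕ} (i : Fin (n + 1)) (w : X _⦋n⦌) :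
    (X.δ i.castSucc).hom ((X.σ i).hom w) = w :=
  ConcreteCategory.congr_hom X.δ_comp_σ_self w

lemma δ_succ_σ_apply {n : ℕ} (i : Fin (n + 1)) (w : X _⦋n⦌) :
    (X.δ i.succ).hom ((X.σ i).hom w) = w :=
  ConcreteCategory.congr_hom X.δ_comp_σ_succ w

lemma δ_succ_surjective {n : ℕ} (i : Fin (n + 1)) : Function.Surjective (X.δ i.succ).hom :=
  fun w => ⟨(X.σ i).hom w, δ_succ_σ_apply i w⟩

lemma δ_δ_eq_one_of_castSucc_lt {n : ℕ} {i : Fin (n + 2)} {t : Fin (n + 3)}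
    (h : i.castSucc < t) {x : X _⦋n + 2⦌} (hx : (X.δ i.castSucc).hom x = 1) :
    (X.δ i).hom ((X.δ t).hom x) = 1 := by
  obtain ⟨j, rfl⟩ := Fin.exists_succ_eq.2 (Fin.ne_zero_of_lt h)
  rw [δ_δ_apply (Fin.castSucc_lt_succ_iff.1 h), hx, map_one]

lemma δ_δ_eq_one_of_lt_succ {n : ℕ} {i : Fin (n + 2)} {t : Fin (n + 3)}
    (h : t < i.succ) {x : X _⦋n + 2⦌} (hx : (X.δ i.succ).hom x = 1) :
    (X.δ i).hom ((X.δ t).hom x) = 1 := by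
  obtain ⟨j, rfl⟩ := Fin.exists_castSucc_eq.2 (Fin.ne_last_of_lt h)
  rw [← δ_δ_apply (Fin.castSucc_lt_succ_iff.1 h), hx, map_one]

lemma δ_σ_δ_eq_one {n : ℕ} {i t : Fin (n + 3)} {u : Fin (n + 2)}
    (ht : t = u.castSucc ∨ t = u.succ) (hi₁ : i ≠ u.castSucc) (hi₂ : i ≠ u.succ)
    {x : X _⦋n + 2⦌} (hx : (X.δ i).hom x = 1) :
    (X.δ i).hom ((X.σ u).hom ((X.δ t).hom x)) = 1 := by
  have ht' : u.val ≤ t.val ∧ t.val ≤ u.val + 1 := by rcases ht with rfl | rfl <;> simp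
  have hi : i.val < u.val ∨ u.val + 1 < i.val := by
    have h₁ := Fin.val_ne_of_ne hi₁
    have h₂ := Fin.val_ne_of_ne hi₂
    simp only [Fin.val_castSucc, Fin.val_succ] at h₁ h₂
    omega
  rcases hi with hi | hi
  · obtain ⟨i, rfl⟩ := (Fin.exists_castSucc_eq (i := i)).2 (by rintro rfl; simp at hi; omega)
    obtain ⟨u, rfl⟩ := (Fin.exists_succ_eq (x := u)).2 (by rintro rfl; simp at hi)
    rw [δ_σ_apply_of_le (Fin.le_def.2 (by simp at hi ⊢; omega)),
      δ_δ_eq_one_of_castSucc_lt (Fin.lt_def.2 (by simp at hi ht' ⊢; omega)) hx, map_one]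
  · obtain ⟨i, rfl⟩ := (Fin.exists_succ_eq (x := i)).2 (by rintro rfl; simp at hi)
    obtain ⟨u, rfl⟩ := (Fin.exists_castSucc_eq (i := u)).2 (by rintro rfl; simp at hi; omega)
    rw [δ_σ_apply_of_gt (Fin.lt_def.2 (by simp at hi ⊢; omega)),
      δ_δ_eq_one_of_lt_succ (Fin.lt_def.2 (by simp at hi ht' ⊢; omega)) hx, map_one]

lemma δ_last_σ_δ_eq_one {n : ℕ} {t : Fin (n + 2)} (u : Fin (n + 1)) {x : X _⦋n + 2⦌}
    (h : (X.δ t).hom ((X.δ (Fin.last _)).hom x) = 1) :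
    (X.δ (Fin.last _)).hom ((X.σ u.castSucc).hom ((X.δ t.castSucc).hom x)) = 1 := by
  rw [← Fin.succ_last, δ_σ_apply_of_gt (Fin.castSucc_lt_last u), ← δ_δ_apply (Fin.le_last t),
    Fin.succ_last, h, map_one]

theorem exists_δ_last_eq {q : ℕ} {A : Finset (Fin (q + 2))} (hA : A ≠ Finset.univ)
    {y : X _⦋q + 1⦌} (hy : ∀ i ∈ A, (X.δ i).hom y = 1) :
    ∃ x : X _⦋q + 2⦌, (X.δ (Fin.last _)).hom x = y ∧ ∀ i ∈ A, (X.δ i.castSucc).hom x = 1 := by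
  induction A using Finset.strongInduction with
  | H A ih =>
  rcases A.eq_empty_or_nonempty with rfl | hne
  · obtain ⟨x, hx⟩ := δ_succ_surjective (X := X) (Fin.last (q + 1)) y
    exact ⟨x, by simpa using hx, by simp⟩
  obtain ⟨u, hu⟩ := Fin.exists_xor_castSucc_mem_succ_mem hne hA
  obtain ⟨t, htA, ht, hother⟩ : ∃ t ∈ A, (t = u.castSucc ∨ t = u.succ) ∧
      ∀ i ∈ A.erase t, i ≠ u.castSucc ∧ i ≠ u.succ := by
    rcases hu with ⟨hin, hout⟩ | ⟨hin, hout⟩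
    · exact ⟨_, hin, .inl rfl, fun i hi =>
        ⟨Finset.ne_of_mem_erase hi, fun h => hout (h ▸ Finset.mem_of_mem_erase hi)⟩⟩
    · exact ⟨_, hin, .inr rfl, fun i hi =>
        ⟨fun h => hout (h ▸ Finset.mem_of_mem_erase hi), Finset.ne_of_mem_erase hi⟩⟩
  obtain ⟨x, hxy, hx⟩ := ih (A.erase t) (Finset.erase_ssubset htA)
    (fun h => Finset.notMem_erase t A (h ▸ Finset.mem_univ t))
    (fun i hi => hy i (Finset.mem_of_mem_erase hi))
  have htσ : t.castSucc = u.castSucc.castSucc ∨ t.castSucc = u.castSucc.succ := by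
    rcases ht with rfl | rfl
    · exact .inl rfl
    · exact .inr (Fin.succ_castSucc u).symm
  refine ⟨x * ((X.σ u.castSucc).hom ((X.δ t.castSucc).hom x))⁻¹, ?_, fun i hi => ?_⟩
  · rw [map_mul, map_inv, δ_last_σ_δ_eq_one u (hxy ▸ hy t htA), inv_one, mul_one, hxy]
  by_cases hit : i = t
  · subst hit
    have hσ : (X.δ i.castSucc).hom ((X.σ u.castSucc).hom ((X.δ i.castSucc).hom x)) =
        (X.δ i.castSucc).hom x := by
      rcases htσ with h | h <;> rw [h]
      exacts [δ_castSucc_σ_apply _ _, δ_succ_σ_apply _ _]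
    rw [map_mul, map_inv, hσ, mul_inv_cancel]
  · have hi' := Finset.mem_erase.2 ⟨hit, hi⟩
    have hi₁ : i.castSucc ≠ u.castSucc.castSucc := by simpa using (hother i hi').1
    have hi₂ : i.castSucc ≠ u.castSucc.succ := fun h =>
      (hother i hi').2 (Fin.castSucc_injective _ (h.trans (Fin.succ_castSucc u)))
    rw [map_mul, map_inv, δ_σ_δ_eq_one htσ hi₁ hi₂ (hx i hi'), inv_one, mul_one, hx i hi']

theorem map_δ_last_adInf {m : ℕ}
    (h : (⨅ i : Fin (m + 2), (X.δ i.castSucc).hom.ker).map (X.δ (Fin.last (m + 2))).hom =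
      ⨅ i : Fin (m + 2), (X.δ i).hom.ker)
    (B : Finset (Fin (m + 2))) :
    (adInf (fun i => (X.δ i.castSucc).hom.ker) B).map (X.δ (Fin.last (m + 2))).hom =
      adInf (fun i => (X.δ i).hom.ker) B := by
  by_cases hB : B = Finset.univ
  · rwa [hB, adInf_univ, adInf_univ]
  apply le_antisymm
  · rintro _ ⟨x, hx, rfl⟩
    simp only [SetLike.mem_coe, mem_adInf, MonoidHom.mem_ker] at hx ⊢
    exact fun i hi => δ_δ_eq_one_of_castSucc_lt (Fin.castSucc_lt_last i) (hx i hi)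
  · intro y hy
    simp only [mem_adInf, MonoidHom.mem_ker] at hy
    obtain ⟨x, hxy, hx⟩ := exists_δ_last_eq hB hy
    exact ⟨x, mem_adInf.2 fun i hi => hx i hi, hxy⟩

end CategoryTheory.SimplicialObject

theorem image_last_face_adD_general (X : SimplicialObject GrpCat) (G : Type*) [Group G]
    (ε : (X _⦋0⦌ : Type _) →* G)
    (k : ℕ) :
    -- the case n = 1
    ((Subgroup.map (X.δ (1 : Fin 2)).hom (MonoidHom.ker (X.δ (0 : Fin 2)).hom) = ε.ker) →
      Subgroup.map (X.δ (1 : Fin 2)).hom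
          (adD (fun _ : Fin 1 => MonoidHom.ker (X.δ (0 : Fin 2)).hom) k Finset.univ) =
        adD (fun _ : Fin 1 => ε.ker) k Finset.univ) ∧
    -- the case n = m + 2
    (∀ m : ℕ,
      (Subgroup.map (X.δ (Fin.last (m + 2))).hom
          (⨅ i : Fin (m + 2), MonoidHom.ker (X.δ (Fin.castSucc i)).hom) =
        ⨅ i : Fin (m + 2), MonoidHom.ker (X.δ i).hom) →
      Subgroup.map (X.δ (Fin.last (m + 2))).hom
          (adD (fun i : Fin (m + 2) => MonoidHom.ker (X.δ (Fin.castSucc i)).hom) k Finset.univ) =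
        adD (fun i : Fin (m + 2) => MonoidHom.ker (X.δ i).hom) k Finset.univ) :=
  ⟨fun h => adD_map _ (map_adInf_const_fin_one (SimplicialObject.δ_succ_surjective 0) h) _,
    fun _ h => adD_map _ (SimplicialObject.map_δ_last_adInf h) _⟩

/-- For an augmented simplicial group `(X, ε : X₀ → G)`, `k ≥ 2` and `n ≥ 1`, if
`d^n_n(⋂_{i<n} Ker d^n_i) = ⋂_{i<n} Ker d^{n-1}_i` (with the convention `Ker ε` on the
right for `n = 1`), then
`d^n_n(D_k(X_n; Ker d^n_0,…,Ker d^n_{n-1})) = D_k(X_{n-1}; Ker d^{n-1}_0,…,Ker d^{n-1}_{n-1})`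
(for `n = 1` the right-hand side is `D_k(X₀; Ker ε)`).  The two conjuncts treat the cases
`n = 1` and `n = m+2 ≥ 2`. -/
theorem image_last_face_adD (X : SimplicialObject GrpCat) (G : Type*) [Group G]
    (ε : (X _⦋0⦌ : Type _) →* G)
    (hε : ε.comp (X.δ (0 : Fin 2)).hom = ε.comp (X.δ (1 : Fin 2)).hom)
    (k : ℕ) (hk : 2 ≤ k) :
    -- the case n = 1
    ((Subgroup.map (X.δ (1 : Fin 2)).hom (MonoidHom.ker (X.δ (0 : Fin 2)).hom) = ε.ker) →
      Subgroup.map (X.δ (1 : Fin 2)).hom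
          (adD (fun _ : Fin 1 => MonoidHom.ker (X.δ (0 : Fin 2)).hom) k Finset.univ) =
        adD (fun _ : Fin 1 => ε.ker) k Finset.univ) ∧
    -- the case n = m + 2
    (∀ m : ℕ,
      (Subgroup.map (X.δ (Fin.last (m + 2))).hom
          (⨅ i : Fin (m + 2), MonoidHom.ker (X.δ (Fin.castSucc i)).hom) =
        ⨅ i : Fin (m + 2), MonoidHom.ker (X.δ i).hom) →
      Subgroup.map (X.δ (Fin.last (m + 2))).hom
          (adD (fun i : Fin (m + 2) => MonoidHom.ker (X.δ (Fin.castSucc i)).hom) k Finset.univ) =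
        adD (fun i : Fin (m + 2) => MonoidHom.ker (X.δ i).hom) k Finset.univ) :=
  image_last_face_adD_general X G ε k
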